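/- Let L w(x) = Σ_{i ∈ S} e^{-s r_i(x)} w_i(x) be a finite sum over at most k terms, where each r_i is real-valued μ-Hölder with seminorm at most H₀ and |r_i| ≤ R, |Re(s)| ≤ a₀, each w_i is μ-Hölder with seminorm |w|_μ and sup-norm |w|_∞, and each precomposition contracts distances by a factor C₁γ (i.e. the relevant distances satisfy d(ix,iy) ≤ C₁ γ d(x,y)); then |L w(x) - L w(y)| ≤ k e^{a₀ R}(|s| H₀ e^{a₀ H₀ D^μ}|w|_∞ + |w|_μ) C₁^μ γ^μ d(x,y)^μ for x, y in the same piece of a finite partition, where D bounds the diameter. -/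

import Mathlib

lemma abs_exp_sub_exp_le' (u v : ℂ) :
    ‖Complex.exp u - Complex.exp v‖ ≤
      Real.exp (max u.re v.re) * ‖u - v‖ := by
  have hconv : Convex ℝ (segment ℝ v u) := convex_segment v u
  have h := hconv.norm_image_sub_le_of_norm_deriv_le
    (f := Complex.exp) (C := Real.exp (max u.re v.re))
    (fun z _ => Complex.differentiable_exp z)
    (fun z hz => by
      rw [Complex.deriv_exp, Complex.norm_exp]
      apply Real.exp_le_exp.2
      obtain ⟨a, b, ha, hb, hab, rfl⟩ := hz
      have : (a • v + b • u).re = a * v.re + b * u.re := by simp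
      rw [this]
      calc a * v.re + b * u.re ≤ a * max u.re v.re + b * max u.re v.re := by
            gcongr
            · exact le_max_right _ _
            · exact le_max_left _ _
        _ = max u.re v.re := by rw [← add_mul, hab, one_mul])
    (left_mem_segment ℝ v u) (right_mem_segment ℝ v u)
  simpa using h

/-- Hölder continuity of the transfer operator (abstract form of Proposition 3.2):
`|L w(x) - L w(y)| ≤ k e^{a₀ R}(|s| H₀ e^{a₀ H₀ D^μ} |w|_∞ + |w|_μ) C₁^μ γ^μ d(x,y)^μ`. -/
theorem transfer_operator_holder {ι : Type*} {X : Type*} [MetricSpace X]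
    (S : Finset ι) (k : ℕ) (hk : S.card ≤ k)
    (x y : X) (ix iy : ι → X) (r : ι → X → ℝ) (w : X → ℂ) (s : ℂ)
    (a₀ R H₀ C₁ γ D μ Wμ Winf : ℝ)
    (hμ0 : 0 < μ) (hμ1 : μ ≤ 1) (hγ0 : 0 < γ) (hγ1 : γ < 1) (hC₁ : 0 < C₁)
    (ha₀ : 0 ≤ a₀) (hR : 0 ≤ R) (hH₀ : 0 ≤ H₀) (hWμ : 0 ≤ Wμ) (hWinf : 0 ≤ Winf)
    (hs : |s.re| ≤ a₀)
    (hrbound : ∀ i ∈ S, |r i (ix i)| ≤ R ∧ |r i (iy i)| ≤ R)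
    (hrhold : ∀ i ∈ S, |r i (ix i) - r i (iy i)| ≤ H₀ * dist (ix i) (iy i) ^ μ)
    (hcontr : ∀ i ∈ S, dist (ix i) (iy i) ≤ C₁ * γ * dist x y)
    (hdiam : ∀ i ∈ S, dist (ix i) (iy i) ≤ D)
    (hwinf : ∀ i ∈ S, ‖w (ix i)‖ ≤ Winf ∧ ‖w (iy i)‖ ≤ Winf)
    (hwhold : ∀ i ∈ S, ‖w (ix i) - w (iy i)‖ ≤ Wμ * dist (ix i) (iy i) ^ μ) :
    ‖(∑ i ∈ S, Complex.exp (-s * (r i (ix i) : ℂ)) * w (ix i)) -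
        ∑ i ∈ S, Complex.exp (-s * (r i (iy i) : ℂ)) * w (iy i)‖ ≤
      k * Real.exp (a₀ * R) *
        (‖s‖ * H₀ * Real.exp (a₀ * H₀ * D ^ μ) * Winf + Wμ) *
        C₁ ^ μ * γ ^ μ * dist x y ^ μ := by
  rcases S.eq_empty_or_nonempty with rfl | ⟨i0, hi0⟩
  · simp only [Finset.sum_empty, sub_zero, norm_zero]
    positivity
  have hD : 0 ≤ D := le_trans dist_nonneg (hdiam i0 hi0)
  have hexp1 : (1 : ℝ) ≤ Real.exp (a₀ * H₀ * D ^ μ) := by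
    apply Real.one_le_exp
    have : 0 ≤ D ^ μ := Real.rpow_nonneg hD μ
    positivity
  set B : ℝ := Real.exp (a₀ * R) * (‖s‖ * H₀ * Winf + Wμ) with hB
  have hBnn : 0 ≤ B := by positivity
  have hdμ : ∀ i ∈ S, dist (ix i) (iy i) ^ μ ≤ C₁ ^ μ * γ ^ μ * dist x y ^ μ := by
    intro i hi
    calc dist (ix i) (iy i) ^ μ ≤ (C₁ * γ * dist x y) ^ μ :=
          Real.rpow_le_rpow dist_nonneg (hcontr i hi) hμ0.le
      _ = C₁ ^ μ * γ ^ μ * dist x y ^ μ := by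
          rw [Real.mul_rpow (by positivity) dist_nonneg,
            Real.mul_rpow hC₁.le hγ0.le]
  have key : ∀ i ∈ S,
      ‖Complex.exp (-s * (r i (ix i) : ℂ)) * w (ix i) -
        Complex.exp (-s * (r i (iy i) : ℂ)) * w (iy i)‖ ≤
      B * (C₁ ^ μ * γ ^ μ * dist x y ^ μ) := by
    intro i hi
    set a := r i (ix i)
    set b := r i (iy i)
    have hre : ∀ c : ℝ, |c| ≤ R → (-s * (c : ℂ)).re ≤ a₀ * R := by
      intro c hc
      have : (-s * (c : ℂ)).re = -(s.re * c) := by simp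
      rw [this]
      calc -(s.re * c) ≤ |(-(s.re * c))| := le_abs_self _
        _ = |s.re| * |c| := by rw [abs_neg, abs_mul]
        _ ≤ a₀ * R := mul_le_mul hs hc (abs_nonneg _) ha₀
    have h1 : ‖Complex.exp (-s * (a : ℂ))‖ ≤ Real.exp (a₀ * R) := by
      rw [Complex.norm_exp]
      exact Real.exp_le_exp.2 (hre a (hrbound i hi).1)
    have h2 : ‖Complex.exp (-s * (a : ℂ)) - Complex.exp (-s * (b : ℂ))‖ ≤
        Real.exp (a₀ * R) * (‖s‖ * (H₀ * dist (ix i) (iy i) ^ μ)) := by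
      calc ‖Complex.exp (-s * (a : ℂ)) - Complex.exp (-s * (b : ℂ))‖
          ≤ Real.exp (max (-s * (a : ℂ)).re (-s * (b : ℂ)).re) *
            ‖-s * (a : ℂ) - -s * (b : ℂ)‖ := abs_exp_sub_exp_le' _ _
        _ ≤ Real.exp (a₀ * R) * (‖s‖ * (H₀ * dist (ix i) (iy i) ^ μ)) := by
            apply mul_le_mul _ _ (norm_nonneg _) (Real.exp_nonneg _)
            · exact Real.exp_le_exp.2
                (max_le (hre a (hrbound i hi).1) (hre b (hrbound i hi).2))
            · have : -s * (a : ℂ) - -s * (b : ℂ) = -s * ((a - b : ℝ) : ℂ) := by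
                push_cast; ring
              rw [this, norm_mul, norm_neg, Complex.norm_real, Real.norm_eq_abs]
              exact mul_le_mul_of_nonneg_left (hrhold i hi) (norm_nonneg _)
    calc ‖Complex.exp (-s * (a : ℂ)) * w (ix i) -
          Complex.exp (-s * (b : ℂ)) * w (iy i)‖
        = ‖Complex.exp (-s * (a : ℂ)) * (w (ix i) - w (iy i)) +
            (Complex.exp (-s * (a : ℂ)) - Complex.exp (-s * (b : ℂ))) * w (iy i)‖ := by
          ring_nf
      _ ≤ ‖Complex.exp (-s * (a : ℂ))‖ * ‖w (ix i) - w (iy i)‖ +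
          ‖Complex.exp (-s * (a : ℂ)) - Complex.exp (-s * (b : ℂ))‖ *
            ‖w (iy i)‖ := by
          refine (norm_add_le _ _).trans ?_
          rw [norm_mul, norm_mul]
      _ ≤ Real.exp (a₀ * R) * (Wμ * dist (ix i) (iy i) ^ μ) +
          Real.exp (a₀ * R) * (‖s‖ * (H₀ * dist (ix i) (iy i) ^ μ)) * Winf := by
          refine add_le_add ?_ ?_
          · exact mul_le_mul h1 (hwhold i hi) (norm_nonneg _)
              (Real.exp_nonneg _)
          · exact mul_le_mul h2 ((hwinf i hi).2) (norm_nonneg _)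
              (by positivity)
      _ = B * dist (ix i) (iy i) ^ μ := by rw [hB]; ring
      _ ≤ B * (C₁ ^ μ * γ ^ μ * dist x y ^ μ) :=
          mul_le_mul_of_nonneg_left (hdμ i hi) hBnn
  have hsum : ‖(∑ i ∈ S, Complex.exp (-s * (r i (ix i) : ℂ)) * w (ix i)) -
      ∑ i ∈ S, Complex.exp (-s * (r i (iy i) : ℂ)) * w (iy i)‖ ≤
      S.card * (B * (C₁ ^ μ * γ ^ μ * dist x y ^ μ)) := by
    rw [← Finset.sum_sub_distrib]
    calc ‖∑ i ∈ S, (Complex.exp (-s * (r i (ix i) : ℂ)) * w (ix i) -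
          Complex.exp (-s * (r i (iy i) : ℂ)) * w (iy i))‖
        ≤ ∑ i ∈ S, ‖Complex.exp (-s * (r i (ix i) : ℂ)) * w (ix i) -
          Complex.exp (-s * (r i (iy i) : ℂ)) * w (iy i)‖ := norm_sum_le _ _
      _ ≤ ∑ _i ∈ S, B * (C₁ ^ μ * γ ^ μ * dist x y ^ μ) := Finset.sum_le_sum key
      _ = S.card * (B * (C₁ ^ μ * γ ^ μ * dist x y ^ μ)) := by
          rw [Finset.sum_const, nsmul_eq_mul]
  refine hsum.trans ?_
  have hBle : B ≤ Real.exp (a₀ * R) *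
      (‖s‖ * H₀ * Real.exp (a₀ * H₀ * D ^ μ) * Winf + Wμ) := by
    rw [hB]
    apply mul_le_mul_of_nonneg_left _ (Real.exp_nonneg _)
    nlinarith [hexp1, norm_nonneg s, hH₀, hWinf, hWμ,
      mul_nonneg (mul_nonneg (norm_nonneg s) hH₀) hWinf]
  calc S.card * (B * (C₁ ^ μ * γ ^ μ * dist x y ^ μ))
      ≤ k * (Real.exp (a₀ * R) *
        (‖s‖ * H₀ * Real.exp (a₀ * H₀ * D ^ μ) * Winf + Wμ) *
        (C₁ ^ μ * γ ^ μ * dist x y ^ μ)) := by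
        apply mul_le_mul (Nat.cast_le.2 hk) _ (by positivity) (Nat.cast_nonneg _)
        exact mul_le_mul_of_nonneg_right hBle (by positivity)
    _ = k * Real.exp (a₀ * R) *
        (‖s‖ * H₀ * Real.exp (a₀ * H₀ * D ^ μ) * Winf + Wμ) *
        C₁ ^ μ * γ ^ μ * dist x y ^ μ := by ring
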